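/- Let G = (V,E) be a finite undirected unweighted graph, let v ∈ V, let A, B ⊆ V, and let ε > 0 be a real number. Let u ∈ B be a vertex with δ(v,u) = δ(v,B), let Q be a shortest v–u path in G, and let x₁ and x₂ be two vertices on Q with x₁ ≠ v appearing strictly before x₂ in the order along Q from v to u. If δ(v,B,x₁) ≤ (1+ε)·δ(v,B,x₂), then Ball^{x₁}(v,A,B,ε) ⊆ Ball(v,A,B) ∪ Ball^{x₂}(v,A,B). -/

import Mathlib

open scoped ENNReal Classical

/-- The graph `G` with vertex `x` "failed": edges incident to `x` are removed,
so that walks in `G.avoid x` are exactly walks of `G` avoiding `x`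
(for endpoints different from `x`). -/
def SimpleGraph.avoid {V : Type*} (G : SimpleGraph V) (x : V) : SimpleGraph V where
  Adj a b := G.Adj a b ∧ a ≠ x ∧ b ≠ x
  symm := ⟨fun _ _ h => ⟨h.1.symm, h.2.2, h.2.1⟩⟩
  loopless := ⟨fun a h => G.loopless.irrefl a h.1⟩

/-- `δ(a,b,x)` : the distance (in `ℕ∞`) between `a` and `b` in `G − x`,
with the convention that it is `∞` if `a = x` or `b = x`. -/
noncomputable def davoid {V : Type*} (G : SimpleGraph V) (a b x : V) : ℕ∞ :=
  if a = x ∨ b = x then ⊤ else (G.avoid x).edist a b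

/-- `δ(v,B)` : distance from `v` to the set `B`. -/
noncomputable def dset {V : Type*} (G : SimpleGraph V) (v : V) (B : Set V) : ℕ∞ :=
  ⨅ w ∈ B, G.edist v w

/-- `δ(v,B,x)` : distance from `v` to the set `B` in `G − x`. -/
noncomputable def dsetAvoid {V : Type*} (G : SimpleGraph V) (v : V) (B : Set V) (x : V) : ℕ∞ :=
  ⨅ w ∈ B, davoid G v w x

/-- `Ball(v,A,B) = {w ∈ A : δ(v,w) < δ(v,B)}`. -/
def ball {V : Type*} (G : SimpleGraph V) (v : V) (A B : Set V) : Set V :=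
  {w ∈ A | G.edist v w < dset G v B}

/-- `Ball^x(v,A,B) = {w ∈ A : δ(v,w,x) < δ(v,B,x)}`. -/
def ballAvoid {V : Type*} (G : SimpleGraph V) (v : V) (A B : Set V) (x : V) : Set V :=
  {w ∈ A | davoid G v w x < dsetAvoid G v B x}

/-- `Ball^x(v,A,B,ε) = {w ∈ A : (1+ε)·δ(v,w,x) < δ(v,B,x)}`. -/
def ballTrunc {V : Type*} (G : SimpleGraph V) (v : V) (A B : Set V) (x : V) (ε : ℝ) : Set V :=
  {w ∈ A | ENNReal.ofReal (1 + ε) * (davoid G v w x : ℝ≥0∞) < (dsetAvoid G v B x : ℝ≥0∞)}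

/-- `C^x(w,A,B,ε) = {v ∈ V : (1+ε)·δ(v,w,x) < δ(v,B,x)}`. -/
def clusterTrunc {V : Type*} (G : SimpleGraph V) (w : V) (B : Set V) (x : V) (ε : ℝ) : Set V :=
  {v | ENNReal.ofReal (1 + ε) * (davoid G v w x : ℝ≥0∞) < (dsetAvoid G v B x : ℝ≥0∞)}

/-! Suppose `w` lies in the truncated ball but in neither of the other two. Then
`(1+ε)δ(v,w,x₁) < δ(v,B,x₁) ≤ (1+ε)δ(v,B,x₂) ≤ (1+ε)δ(v,w,x₂)`, so a shortest `v`–`w` path `P`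
in `G − x₁` must pass through `x₂`. As `δ(v,w) ≥ δ(v,B) = |Q|`, the part of `Q` after `x₂` is no
longer than the part of `P` after `x₂`; splicing it onto `P` gives a `v`–`u` walk avoiding `x₁`
(which comes before `x₂` on `Q`) of length at most `|P|`, whence `δ(v,B,x₁) ≤ δ(v,w,x₁)`,
contradicting the first inequality. -/

lemma List.le_idxOf_of_mem_drop {α : Type*} [BEq α] [LawfulBEq α] {l : List α} (hl : l.Nodup)
    {k : ℕ} {x : α} (hx : x ∈ l.drop k) : k ≤ l.idxOf x := by
  obtain ⟨i, hi, rfl⟩ := List.mem_iff_getElem.1 hx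
  rw [List.getElem_drop, hl.idxOf_getElem]
  omega

namespace SimpleGraph

open Walk

variable {V : Type*} {G : SimpleGraph V}

lemma Walk.IsPath.notMem_support_dropUntil [DecidableEq V] {a b x y : V} {p : G.Walk a b}
    (hp : p.IsPath) (hy : y ∈ p.support) (h : p.support.idxOf x < p.support.idxOf y) :
    x ∉ (p.dropUntil y hy).support := by
  rw [dropUntil_eq_drop, support_copy, drop_support_eq_support_drop_min]
  intro hx
  have := List.le_idxOf_of_mem_drop hp.support_nodup hx
  have := List.idxOf_lt_length_of_mem hy
  rw [length_support] at this
  omega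

lemma avoid_le (x : V) : G.avoid x ≤ G := fun _ _ h => h.1

lemma Walk.notMem_support_of_avoid {x a b : V} (p : (G.avoid x).Walk a b) (ha : a ≠ x) :
    x ∉ p.support := by
  induction p with
  | nil => simpa using ha.symm
  | cons h _ ih => simpa [ha.symm] using ih h.2.2

lemma edist_avoid_le_length {x a b : V} (p : G.Walk a b) (hx : x ∉ p.support) :
    (G.avoid x).edist a b ≤ p.length := by
  have hp : ∀ e ∈ p.edges, e ∈ (G.avoid x).edgeSet := by
    intro e he
    induction e using Sym2.ind with
    | _ c d =>
      exact ⟨p.edges_subset_edgeSet he, fun h => hx (h ▸ p.fst_mem_support_of_mem_edges he),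
        fun h => hx (h ▸ p.snd_mem_support_of_mem_edges he)⟩
  simpa using (p.transfer _ hp).edist_le

lemma davoid_eq_edist {a b x : V} (ha : a ≠ x) (hb : b ≠ x) :
    davoid G a b x = (G.avoid x).edist a b := by
  simp [davoid, ha, hb]

lemma davoid_le_length {a b x : V} (p : G.Walk a b) (hx : x ∉ p.support) :
    davoid G a b x ≤ p.length := by
  rw [davoid_eq_edist (fun h : a = x => hx (h ▸ p.start_mem_support))
    (fun h : b = x => hx (h ▸ p.end_mem_support))]
  exact edist_avoid_le_length p hx

lemma exists_walk_length_eq_davoid {a b x : V} (h : davoid G a b x ≠ ⊤) :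
    ∃ p : G.Walk a b, x ∉ p.support ∧ (p.length : ℕ∞) = davoid G a b x := by
  have hax : a ≠ x := fun hax => h (by simp [davoid, hax])
  have hbx : b ≠ x := fun hbx => h (by simp [davoid, hbx])
  rw [davoid_eq_edist hax hbx] at h ⊢
  obtain ⟨p, hp⟩ := exists_walk_of_edist_ne_top h
  refine ⟨p.mapLe (avoid_le x), ?_, by rw [length_mapLe, hp]⟩
  rw [support_mapLe_eq_support]
  exact p.notMem_support_of_avoid hax

lemma davoid_le_length_of_mem_support [DecidableEq V] {v u w x₁ x₂ : V}
    {Q : G.Walk v u} (hQ : Q.IsPath) (hx₂Q : x₂ ∈ Q.support)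
    (horder : Q.support.idxOf x₁ < Q.support.idxOf x₂) (P : G.Walk v w)
    (hQP : (Q.length : ℕ∞) ≤ G.edist v w) (hx₁P : x₁ ∉ P.support) (hx₂P : x₂ ∈ P.support) :
    davoid G v u x₁ ≤ P.length := by
  have hQ_split := congrArg Walk.length (Q.take_spec hx₂Q)
  have hP_split := congrArg Walk.length (P.take_spec hx₂P)
  rw [length_append] at hQ_split hP_split
  have hQ_le : Q.length ≤ (Q.takeUntil x₂ hx₂Q).length + (P.dropUntil x₂ hx₂P).length := by
    have := hQP.trans ((Q.takeUntil x₂ hx₂Q).append (P.dropUntil x₂ hx₂P)).edist_le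
    exact_mod_cast length_append _ _ ▸ this
  have hx₁ : x₁ ∉ ((P.takeUntil x₂ hx₂P).append (Q.dropUntil x₂ hx₂Q)).support := by
    rw [mem_support_append_iff, not_or]
    exact ⟨fun h => hx₁P (P.support_takeUntil_subset_support hx₂P h),
      hQ.notMem_support_dropUntil hx₂Q horder⟩
  calc davoid G v u x₁ ≤ _ := davoid_le_length _ hx₁
    _ ≤ P.length := by rw [length_append]; exact_mod_cast (by omega)

end SimpleGraph

theorem stmt7_general {V : Type*} [DecidableEq V] (G : SimpleGraph V) (v : V)
    (A B : Set V) (ε : ℝ) (hε : 0 < ε) (u : V) (hu : u ∈ B)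
    (hnear : G.edist v u = dset G v B)
    (Q : G.Walk v u) (hQ : Q.IsPath) (hQlen : (Q.length : ℕ∞) = G.edist v u)
    (x₁ x₂ : V) (hx₂ : x₂ ∈ Q.support)
    (horder : Q.support.idxOf x₁ < Q.support.idxOf x₂)
    (hdB : (dsetAvoid G v B x₁ : ℝ≥0∞)
      ≤ ENNReal.ofReal (1 + ε) * (dsetAvoid G v B x₂ : ℝ≥0∞)) :
    ballTrunc G v A B x₁ ε ⊆ ball G v A B ∪ ballAvoid G v A B x₂ := by
  rintro w ⟨hwA, hw⟩
  by_contra hcon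
  simp only [Set.mem_union, ball, ballAvoid, Set.mem_ofPred_eq, hwA, true_and, not_or,
    not_lt] at hcon
  obtain ⟨hBw, hB₂w⟩ := hcon
  have hc₀ : ENNReal.ofReal (1 + ε) ≠ 0 := (ENNReal.ofReal_pos.2 (by linarith)).ne'
  have hc₁ : 1 ≤ ENNReal.ofReal (1 + ε) := ENNReal.one_le_ofReal.2 (by linarith)
  have hlt : davoid G v w x₁ < davoid G v w x₂ := by
    refine ENat.toENNReal_lt.1 ((ENNReal.mul_lt_mul_iff_right hc₀ ENNReal.ofReal_ne_top).1 ?_)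
    calc _ < _ := hw
      _ ≤ _ := hdB
      _ ≤ _ := by gcongr
  obtain ⟨P, hx₁P, hP⟩ := SimpleGraph.exists_walk_length_eq_davoid hlt.ne_top
  by_cases hx₂P : x₂ ∈ P.support
  · have hB₁w : dsetAvoid G v B x₁ ≤ davoid G v w x₁ :=
      calc dsetAvoid G v B x₁ ≤ davoid G v u x₁ := iInf₂_le u hu
        _ ≤ P.length := SimpleGraph.davoid_le_length_of_mem_support hQ hx₂ horder P
            (hQlen ▸ hnear ▸ hBw) hx₁P hx₂P
        _ = davoid G v w x₁ := hP
    have := calc (dsetAvoid G v B x₁ : ℝ≥0∞) ≤ davoid G v w x₁ := ENat.toENNReal_le.2 hB₁w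
      _ ≤ ENNReal.ofReal (1 + ε) * davoid G v w x₁ := le_mul_of_one_le_left zero_le hc₁
      _ < dsetAvoid G v B x₁ := hw
    exact this.false
  · exact (hlt.trans_le (hP ▸ SimpleGraph.davoid_le_length P hx₂P)).false

/-- Lemma 5.3 of the paper: let `u ∈ B` be nearest to `v`, `Q` a
shortest `v`–`u` path, `x₁ ≠ v` strictly before `x₂` on `Q`, and
`δ(v,B,x₁) ≤ (1+ε)·δ(v,B,x₂)`. Then
`Ball^{x₁}(v,A,B,ε) ⊆ Ball(v,A,B) ∪ Ball^{x₂}(v,A,B)`. -/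
theorem stmt7 {V : Type*} [Fintype V] [DecidableEq V] (G : SimpleGraph V) (v : V)
    (A B : Set V) (ε : ℝ) (hε : 0 < ε) (u : V) (hu : u ∈ B)
    (hnear : G.edist v u = dset G v B)
    (Q : G.Walk v u) (hQ : Q.IsPath) (hQlen : (Q.length : ℕ∞) = G.edist v u)
    (x₁ x₂ : V) (hx₁ : x₁ ∈ Q.support) (hx₂ : x₂ ∈ Q.support) (hx₁v : x₁ ≠ v)
    (horder : Q.support.idxOf x₁ < Q.support.idxOf x₂)
    (hdB : (dsetAvoid G v B x₁ : ℝ≥0∞)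
      ≤ ENNReal.ofReal (1 + ε) * (dsetAvoid G v B x₂ : ℝ≥0∞)) :
    ballTrunc G v A B x₁ ε ⊆ ball G v A B ∪ ballAvoid G v A B x₂ :=
  stmt7_general G v A B ε hε u hu hnear Q hQ hQlen x₁ x₂ hx₂ horder hdB
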